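/- arXiv:1312.7387 — 5 statements merged into one kernel-verified Lean document; each statement's English description precedes it below -/
import Mathlib

section
/- For the associate family X_θ of the helicoid/catenoid with unit normal N = (cos u / cosh v, sin u / cosh v, −sinh v / cosh v), and f(x,y,z) = (x^2 + y^2)/2, one has ⟨∇f ∘ X_θ, N⟩ = sin θ at every point (u,v). In particular, since each X_θ is a minimal surface (H = 0), X_θ has constant weighted mean curvature sin θ in G^2 × R; the helicoid X_0 is weighted minimal and the catenoid X_{π/2} has constant weighted mean curvature 1. -/
open Real

/-- The associate family of the helicoid/catenoid. -/
noncomputable def assocFamily (θ u v : ℝ) : Fin 3 → ℝ :=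
  ![Real.cos θ * Real.sinh v * Real.sin u + Real.sin θ * Real.cosh v * Real.cos u,
    -(Real.cos θ * Real.sinh v * Real.cos u) + Real.sin θ * Real.cosh v * Real.sin u,
    u * Real.cos θ + v * Real.sin θ]

/-- The unit normal of the associate family. -/
noncomputable def assocNormal (u v : ℝ) : Fin 3 → ℝ :=
  ![Real.cos u / Real.cosh v, Real.sin u / Real.cosh v, -Real.sinh v / Real.cosh v]

/-- For `X_θ` with unit normal `N` and `f(x,y,z) = (x²+y²)/2` (so
`∇f(x,y,z) = (x,y,0)`), one has `⟨∇f ∘ X_θ, N⟩ = sin θ` at every point `(u,v)`.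
In particular, since `X_θ` is minimal (`H = 0`), its weighted mean curvature
`H_f = H + ⟨∇f, N⟩` is the constant `sin θ`: the helicoid `X_0` is weighted minimal
and the catenoid `X_{π/2}` has constant weighted mean curvature 1. -/
theorem assocFamily_inner_gradWeight_eq_sin (θ u v : ℝ) :
    assocFamily θ u v 0 * assocNormal u v 0 +
      assocFamily θ u v 1 * assocNormal u v 1 +
      0 * assocNormal u v 2 = Real.sin θ ∧
    (0 : ℝ) + Real.sin θ = Real.sin θ ∧
    Real.sin 0 = 0 ∧ Real.sin (Real.pi / 2) = 1 := by
  refine ⟨?_, by ring, Real.sin_zero, Real.sin_pi_div_two⟩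
  have hc : Real.cosh v ≠ 0 := (Real.cosh_pos v).ne'
  have hs : Real.sin u ^ 2 + Real.cos u ^ 2 = 1 := Real.sin_sq_add_cos_sq u
  simp only [assocFamily, assocNormal, Matrix.cons_val_zero, Matrix.cons_val_one,
    Matrix.head_cons]
  field_simp
  linear_combination Real.cosh v * Real.sin θ * hs
end

section
/- Let f(x) = |x|^2/2 on R^n and h: R → R differentiable. A non-horizontal, non-vertical hyperplane Σ_{i=1}^n a_i x_i + x_{n+1} + c = 0 (with (a_1,...,a_n) ≠ 0) in R^n × R with density e^{-(f+h)} is weighted minimal if and only if h(t) = t^2/2 + c t + b for some constant b ∈ R. -/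
/-!
On the hyperplane the coordinate `x_{n+1}` takes every real value `t`, and since `a ≠ 0` the
linear part `Σ aᵢxᵢ` can be chosen freely as `-(t + c)`. So weighted minimality says exactly
`h' (t) = t + c` for all `t`, and a differentiable `h` with this derivative is
`t² / 2 + c t` up to an additive constant.
-/

open Function

theorem surjective_sum_mul_of_ne_zero {ι : Type*} [Fintype ι] [DecidableEq ι] {a : ι → ℝ}
    (ha : a ≠ 0) : Surjective fun x : EuclideanSpace ℝ ι => ∑ i, a i * x i := by
  obtain ⟨i, hi⟩ := ne_iff.mp ha
  intro s
  refine ⟨EuclideanSpace.single i (s / a i), ?_⟩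
  simp [mul_div_cancel₀ _ hi]

theorem forall_add_eq_zero_imp_iff {E : Type*} {L : E → ℝ} (hL : Surjective L) (c : ℝ)
    (g : ℝ → ℝ) :
    (∀ x t, L x + t + c = 0 → L x + g t = 0) ↔ ∀ t, g t = t + c := by
  constructor
  · intro H t
    obtain ⟨x, hx⟩ := hL (-(t + c))
    have := H x t (by rw [hx]; ring)
    linarith
  · intro H x t hxt
    rw [H t]
    linarith

theorem hasDerivAt_sq_div_two_add_mul (c t : ℝ) :
    HasDerivAt (fun t : ℝ => t ^ 2 / 2 + c * t) (t + c) t :=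
  (((hasDerivAt_pow 2 t).div_const 2).fun_add ((hasDerivAt_id' t).const_mul c)).congr_deriv
    (by norm_num)

theorem forall_deriv_eq_add_iff_exists_eq {h : ℝ → ℝ} (hdiff : Differentiable ℝ h) (c : ℝ) :
    (∀ t, deriv h t = t + c) ↔ ∃ b, ∀ t, h t = t ^ 2 / 2 + c * t + b := by
  constructor
  · intro H
    obtain ⟨b, hb⟩ := isOpen_univ.exists_eq_add_of_deriv_eq (g := fun t => t ^ 2 / 2 + c * t)
      isPreconnected_univ hdiff.differentiableOn
      (fun t _ => (hasDerivAt_sq_div_two_add_mul c t).differentiableAt.differentiableWithinAt)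
      (fun t _ => by rw [H t, (hasDerivAt_sq_div_two_add_mul c t).deriv])
    exact ⟨b, fun t => hb (Set.mem_univ t)⟩
  · rintro ⟨b, hb⟩ t
    rw [show h = fun t => t ^ 2 / 2 + c * t + b from funext hb]
    exact ((hasDerivAt_sq_div_two_add_mul c t).add_const b).deriv

/-- A non-horizontal, non-vertical hyperplane
`Σ aᵢxᵢ + x_{n+1} + c = 0` with `(a₁,…,aₙ) ≠ 0` in ℝⁿ × ℝ with density `e^{-(f+h)}`,
`f(x) = |x|²/2`, is weighted minimal (i.e. `Σ aᵢxᵢ + h'(x_{n+1}) = 0` at every point of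
the hyperplane) if and only if `h(t) = t²/2 + c·t + b` for some constant `b ∈ ℝ`. -/
theorem nonhorizontal_hyperplane_weighted_minimal_iff
    (n : ℕ) (a : Fin n → ℝ) (ha : a ≠ 0) (c : ℝ)
    (h : ℝ → ℝ) (hdiff : Differentiable ℝ h) :
    (∀ (x : EuclideanSpace ℝ (Fin n)) (t : ℝ),
        (∑ i, a i * x i) + t + c = 0 →
        (∑ i, a i * x i) + deriv h t = 0) ↔
    (∃ b : ℝ, ∀ t : ℝ, h t = t ^ 2 / 2 + c * t + b) :=
  (forall_add_eq_zero_imp_iff (surjective_sum_mul_of_ne_zero ha) c (deriv h)).trans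
    (forall_deriv_eq_add_iff_exists_eq hdiff c)
end

section
/- If h: R → R is strictly monotone (so h' never vanishes where differentiable, or more precisely h'(t) ≠ 0 for all t), then no hyperplane in R^n × R with density e^{-(f+h)}, f(x) = |x|^2/2, is weighted minimal. -/
/-- If `h : ℝ → ℝ` is differentiable with `h'(t) ≠ 0` for all `t`
(e.g. `h` strictly monotone with nonvanishing derivative), then no non-vertical
hyperplane `Σ aᵢxᵢ + x_{n+1} + c = 0` in ℝⁿ × ℝ with density `e^{-(f+h)}`,
`f(x) = |x|²/2`, is weighted minimal (weighted minimality of such a hyperplane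
meaning `Σ aᵢxᵢ + h'(x_{n+1}) = 0` at every point of the hyperplane). -/
theorem no_weighted_minimal_hyperplane_of_deriv_ne_zero
    (n : ℕ) (h : ℝ → ℝ) (hdiff : Differentiable ℝ h)
    (hd : ∀ t : ℝ, deriv h t ≠ 0) :
    ∀ (a : Fin n → ℝ) (c : ℝ),
      ¬ (∀ (x : EuclideanSpace ℝ (Fin n)) (t : ℝ),
          (∑ i, a i * x i) + t + c = 0 →
          (∑ i, a i * x i) + deriv h t = 0) := by
  intro a c H
  have := H 0 (-c) (by simp)
  simp at this
  exact hd (-c) this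
end

section
/- The graph of u(x,y) = x^2 over R^2 in R^3 with density e^{-(f(x,y)+h(z))}, where f(x,y) = (x^2+y^2)/2 and h(z) = z^2 − ln√(1+4z) (defined for z ≥ 0), is weighted minimal, i.e. its weighted mean curvature H_{f+h} = H + ⟨∇(f+h), n⟩ vanishes identically on the graph. -/
open Real

/-- The graph of `u(x,y) = x²` over ℝ² in ℝ³ with density
`e^{-(f(x,y)+h(z))}`, where `f(x,y) = (x²+y²)/2` and `h(z) = z² − ln√(1+4z)`
(for `z ≥ 0`), is weighted minimal: with upward unit normal
`n = (−u_x, −u_y, 1)/√(1+|∇u|²)` one has mean curvature `H = 2/(1+4x²)^{3/2}` and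
`H_{f+h} = H + ⟨∇(f+h), n⟩ = 2/(1+4x²)^{3/2} + (−x·2x − y·0 + h'(x²))/√(1+4x²) = 0`
identically on the graph `z = x²`. -/
theorem graph_x_sq_weighted_minimal :
    ∀ x y : ℝ,
      2 / (1 + 4 * x ^ 2) ^ ((3 : ℝ) / 2) +
        (-(x * (2 * x)) - y * 0 +
          deriv (fun z : ℝ => z ^ 2 - Real.log (Real.sqrt (1 + 4 * z))) (x ^ 2)) /
          Real.sqrt (1 + 4 * x ^ 2) = 0 := by
  intro x y
  have h1 : (0:ℝ) < 1 + 4 * x ^ 2 := by positivity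
  have hd : deriv (fun z : ℝ => z ^ 2 - Real.log (Real.sqrt (1 + 4 * z))) (x ^ 2)
      = 2 * x ^ 2 - 2 / (1 + 4 * x ^ 2) := by
    have heq : (fun z : ℝ => z ^ 2 - Real.log (Real.sqrt (1 + 4 * z)))
        =ᶠ[nhds (x ^ 2)] (fun z : ℝ => z ^ 2 - Real.log (1 + 4 * z) / 2) := by
      have hcont : ContinuousAt (fun z : ℝ => 1 + 4 * z) (x ^ 2) := by fun_prop
      have hev : ∀ᶠ z in nhds (x ^ 2), 0 < 1 + 4 * z :=
        hcont.eventually (eventually_gt_nhds (by simpa using h1))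
      filter_upwards [hev] with z hz
      rw [Real.log_sqrt hz.le]
    rw [heq.deriv_eq]
    have h2 : HasDerivAt (fun z : ℝ => (1 + 4 * z)) 4 (x ^ 2) := by
      simpa using ((hasDerivAt_id (x ^ 2)).const_mul 4).const_add 1
    have h3 := (h2.log (ne_of_gt h1)).div_const 2
    have h4 := hasDerivAt_pow 2 (x ^ 2)
    have : deriv (fun z : ℝ => z ^ 2 - Real.log (1 + 4 * z) / 2) (x ^ 2) = _ := (h4.sub h3).deriv
    rw [this]
    push_cast
    field_simp
    ring
  rw [hd]
  have hs : Real.sqrt (1 + 4 * x ^ 2) > 0 := Real.sqrt_pos.mpr h1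
  have hA : (1 + 4 * x ^ 2) ^ ((3 : ℝ) / 2)
      = (1 + 4 * x ^ 2) * Real.sqrt (1 + 4 * x ^ 2) := by
    rw [show (3:ℝ)/2 = 1 + 1/2 by norm_num, Real.rpow_add h1, Real.rpow_one,
      ← Real.sqrt_eq_rpow]
  rw [hA]
  have hsq : Real.sqrt (1 + 4 * x ^ 2) ^ 2 = 1 + 4 * x ^ 2 := Real.sq_sqrt h1.le
  field_simp
  nlinarith [hsq, hs]
end

section
/- (Bernstein theorem in G^n × R) The graph Σ of a smooth function u: R^n → R is weighted minimal in R^{n+1} with density (2π)^{-n/2} e^{-|x|^2/2} (x the first n coordinates) if and only if u is constant, i.e. Σ is a horizontal hyperplane {x_{n+1} = a}. -/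
open MeasureTheory Real

/-- The weighted minimal graph equation over Gauss space `𝔾ⁿ` (density
`(2π)^{-n/2} e^{-|x|²/2}`, `f = (n/2)ln(2π) + |x|²/2`): `H_f = H + ⟨∇f, n⟩ = 0` for
the graph of `u` with upward unit normal reads
`div(∇u/√(1+|∇u|²)) = ⟨x, ∇u(x)⟩/√(1+|∇u(x)|²)`. -/
def IsGaussWeightedMinimalGraph (n : ℕ) (u : EuclideanSpace ℝ (Fin n) → ℝ) : Prop :=
  ∀ x : EuclideanSpace ℝ (Fin n),
    (∑ i, fderiv ℝ
        (fun y => (Real.sqrt (1 + ‖gradient u y‖ ^ 2))⁻¹ • gradient u y)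
        x (EuclideanSpace.single i 1) i) =
      (inner ℝ x (gradient u x) : ℝ) / Real.sqrt (1 + ‖gradient u x‖ ^ 2)


section Aux

variable {n : ℕ}

noncomputable def gW (u : EuclideanSpace ℝ (Fin n) → ℝ) (x : EuclideanSpace ℝ (Fin n)) : ℝ :=
  Real.sqrt (1 + ‖gradient u x‖ ^ 2)

noncomputable def gG (u : EuclideanSpace ℝ (Fin n) → ℝ) (x : EuclideanSpace ℝ (Fin n)) :
    EuclideanSpace ℝ (Fin n) := (gW u x)⁻¹ • gradient u x

variable (u : EuclideanSpace ℝ (Fin n) → ℝ)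

lemma gW_pos (x : EuclideanSpace ℝ (Fin n)) : 0 < gW u x := by
  have : (0:ℝ) < 1 + ‖gradient u x‖ ^ 2 := by positivity
  exact Real.sqrt_pos.2 this

lemma gW_sq (x : EuclideanSpace ℝ (Fin n)) : gW u x ^ 2 = 1 + ‖gradient u x‖ ^ 2 := by
  have : (0:ℝ) ≤ 1 + ‖gradient u x‖ ^ 2 := by positivity
  simp [gW, Real.sq_sqrt this]

lemma gW_one_le (x : EuclideanSpace ℝ (Fin n)) : 1 ≤ gW u x := by
  nlinarith [gW_sq u x, gW_pos u x, sq_nonneg (‖gradient u x‖)]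

lemma norm_gG_le (x : EuclideanSpace ℝ (Fin n)) : ‖gG u x‖ ≤ 1 := by
  have hW := gW_pos u x
  have h1 : ‖gG u x‖ = (gW u x)⁻¹ * ‖gradient u x‖ := by
    simp [gG, norm_smul, abs_of_pos (inv_pos.2 hW)]
    left; positivity
  rw [h1, inv_mul_le_iff₀ hW, mul_one]
  nlinarith [gW_sq u x, gW_pos u x, norm_nonneg (gradient u x)]

lemma contDiff_gradient (hu : ContDiff ℝ (⊤ : ℕ∞) u) : ContDiff ℝ (⊤ : ℕ∞) (gradient u) := by
  have h1 : ContDiff ℝ (⊤ : ℕ∞) (fderiv ℝ u) := hu.fderiv_right (by simp)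
  have h2 : gradient u = fun x =>
      (InnerProductSpace.toDual ℝ (EuclideanSpace ℝ (Fin n))).symm (fderiv ℝ u x) := rfl
  rw [h2]
  exact (InnerProductSpace.toDual ℝ (EuclideanSpace ℝ (Fin n))).symm.contDiff.comp h1

lemma contDiff_gG (hu : ContDiff ℝ (⊤ : ℕ∞) u) : ContDiff ℝ (⊤ : ℕ∞) (gG u) := by
  have hg := contDiff_gradient u hu
  have hW : ContDiff ℝ (⊤ : ℕ∞) (gW u) := by
    apply ContDiff.sqrt
    · exact contDiff_const.add (hg.norm_sq ℝ)
    · intro x; positivity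
  exact (hW.inv (fun x => (gW_pos u x).ne')).smul hg

lemma hasGradientAt_u (hu : ContDiff ℝ (⊤ : ℕ∞) u) (x : EuclideanSpace ℝ (Fin n)) :
    HasGradientAt u (gradient u x) x :=
  ((hu.differentiable (by simp)) x).hasGradientAt

end Aux

section Aux2

variable {n : ℕ} (u : EuclideanSpace ℝ (Fin n) → ℝ)

lemma inner_eq_sum (y z : EuclideanSpace ℝ (Fin n)) : (inner ℝ y z : ℝ) = ∑ i, y i * z i := by
  simp [PiLp.inner_apply, mul_comm]

lemma hasFDerivAt_u (hu : ContDiff ℝ (⊤ : ℕ∞) u) (x : EuclideanSpace ℝ (Fin n)) :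
    HasFDerivAt u (InnerProductSpace.toDual ℝ (EuclideanSpace ℝ (Fin n)) (gradient u x)) x :=
  (hasGradientAt_u u hu x).hasFDerivAt

noncomputable def gS (x : EuclideanSpace ℝ (Fin n)) : ℝ :=
  Real.arctan (u x) * Real.exp (-‖x‖ ^ 2 / 2)

noncomputable def gS' (x : EuclideanSpace ℝ (Fin n)) : EuclideanSpace ℝ (Fin n) →L[ℝ] ℝ :=
  ((1 + u x ^ 2)⁻¹ * Real.exp (-‖x‖ ^ 2 / 2)) •
      (InnerProductSpace.toDual ℝ (EuclideanSpace ℝ (Fin n)) (gradient u x))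
    - (Real.arctan (u x) * Real.exp (-‖x‖ ^ 2 / 2)) •
      (InnerProductSpace.toDual ℝ (EuclideanSpace ℝ (Fin n)) x)

lemma hasFDerivAt_exp_neg_norm_sq (x : EuclideanSpace ℝ (Fin n)) :
    HasFDerivAt (fun y : EuclideanSpace ℝ (Fin n) => Real.exp (-‖y‖ ^ 2 / 2))
      ((-Real.exp (-‖x‖ ^ 2 / 2)) • (InnerProductSpace.toDual ℝ (EuclideanSpace ℝ (Fin n)) x))
      x := by
  have hq : HasFDerivAt (fun y : EuclideanSpace ℝ (Fin n) => -‖y‖ ^ 2 / 2)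
      ((-(1/2) : ℝ) • (2 • (innerSL ℝ x).comp (ContinuousLinearMap.id ℝ _))) x := by
    have h1 := (hasFDerivAt_id x).norm_sq
    have h2 := h1.const_mul (-(1/2) : ℝ)
    have heq : (fun y : EuclideanSpace ℝ (Fin n) => -‖y‖ ^ 2 / 2)
        = fun y : EuclideanSpace ℝ (Fin n) => (-(1/2) : ℝ) * ‖y‖ ^ 2 := by
      funext y; ring
    rw [heq]
    exact h2
  have h3 := (Real.hasDerivAt_exp (-‖x‖ ^ 2 / 2)).comp_hasFDerivAt x hq
  refine h3.congr_fderiv ?_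
  ext v
  simp [InnerProductSpace.toDual_apply_apply]
  try ring

lemma hasFDerivAt_gS (hu : ContDiff ℝ (⊤ : ℕ∞) u) (x : EuclideanSpace ℝ (Fin n)) :
    HasFDerivAt (gS u) (gS' u x) x := by
  have h1 : HasFDerivAt (fun y => Real.arctan (u y))
      (((1 + u x ^ 2)⁻¹ : ℝ) •
        (InnerProductSpace.toDual ℝ (EuclideanSpace ℝ (Fin n)) (gradient u x))) x :=
    (Real.hasDerivAt_arctan' (u x)).comp_hasFDerivAt x (hasFDerivAt_u u hu x)
  have h2 := hasFDerivAt_exp_neg_norm_sq (n := n) x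
  have h3 := h1.mul h2
  refine h3.congr_fderiv ?_
  ext v
  simp [gS', InnerProductSpace.toDual_apply_apply]
  try ring

noncomputable def gF (x : EuclideanSpace ℝ (Fin n)) : EuclideanSpace ℝ (Fin n) :=
  gS u x • gG u x

noncomputable def gF' (x : EuclideanSpace ℝ (Fin n)) :
    EuclideanSpace ℝ (Fin n) →L[ℝ] EuclideanSpace ℝ (Fin n) :=
  gS u x • fderiv ℝ (gG u) x + (gS' u x).smulRight (gG u x)

lemma hasFDerivAt_gF (hu : ContDiff ℝ (⊤ : ℕ∞) u) (x : EuclideanSpace ℝ (Fin n)) :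
    HasFDerivAt (gF u) (gF' u x) x :=
  (hasFDerivAt_gS u hu x).smul (((contDiff_gG u hu).differentiable (by simp) x).hasFDerivAt)

noncomputable def gD (x : EuclideanSpace ℝ (Fin n)) : ℝ :=
  Real.exp (-‖x‖ ^ 2 / 2) * ((1 + u x ^ 2)⁻¹ * (‖gradient u x‖ ^ 2 / gW u x))

end Aux2


section Aux3

variable {n : ℕ} (u : EuclideanSpace ℝ (Fin n) → ℝ)

lemma div_gF (hmin : IsGaussWeightedMinimalGraph n u) (x : EuclideanSpace ℝ (Fin n)) :
    ∑ i, gF' u x (EuclideanSpace.single i 1) i = gD u x := by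
  have hgg : (fun y => (Real.sqrt (1 + ‖gradient u y‖ ^ 2))⁻¹ • gradient u y) = gG u := rfl
  have hm := hmin x
  rw [hgg] at hm
  have hW : (gW u x) ≠ 0 := (gW_pos u x).ne'
  have e1 : ∀ i : Fin n, gF' u x (EuclideanSpace.single i 1) i
      = gS u x * (fderiv ℝ (gG u) x (EuclideanSpace.single i 1) i)
        + (gS' u x (EuclideanSpace.single i 1)) * (gG u x i) := by
    intro i
    simp [gF', ContinuousLinearMap.add_apply, ContinuousLinearMap.smul_apply,
      ContinuousLinearMap.smulRight_apply, PiLp.add_apply, PiLp.smul_apply, smul_eq_mul]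
  rw [Finset.sum_congr rfl (fun i _ => e1 i), Finset.sum_add_distrib, ← Finset.mul_sum, hm]
  have e2 : ∀ i : Fin n, (gS' u x (EuclideanSpace.single i 1)) * (gG u x i)
      = ((1 + u x ^ 2)⁻¹ * Real.exp (-‖x‖ ^ 2 / 2)) * ((gradient u x) i * gG u x i)
        - (Real.arctan (u x) * Real.exp (-‖x‖ ^ 2 / 2)) * (x i * gG u x i) := by
    intro i
    have : (inner ℝ (gradient u x) (EuclideanSpace.single i (1:ℝ)) : ℝ) = (gradient u x) i := by
      rw [EuclideanSpace.inner_single_right]; simp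
    have h2 : (inner ℝ x (EuclideanSpace.single i (1:ℝ)) : ℝ) = x i := by
      simp [EuclideanSpace.inner_single_right]
    simp [gS', InnerProductSpace.toDual_apply_apply, this, h2, -inner_gradient_left,
      ContinuousLinearMap.sub_apply, ContinuousLinearMap.smul_apply, smul_eq_mul]
    rw [← inner_gradient_left, this]
    ring
  rw [Finset.sum_congr rfl (fun i _ => e2 i), Finset.sum_sub_distrib, ← Finset.mul_sum,
    ← Finset.mul_sum, ← inner_eq_sum, ← inner_eq_sum]
  have i1 : (inner ℝ (gradient u x) (gG u x) : ℝ) = (gW u x)⁻¹ * ‖gradient u x‖ ^ 2 := by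
    rw [show gG u x = (gW u x)⁻¹ • gradient u x from rfl, real_inner_smul_right,
      real_inner_self_eq_norm_sq]
  have i2 : (inner ℝ x (gG u x) : ℝ) = (gW u x)⁻¹ * (inner ℝ x (gradient u x) : ℝ) := by
    rw [show gG u x = (gW u x)⁻¹ • gradient u x from rfl, real_inner_smul_right]
  rw [i1, i2]
  simp only [gS, gD, gW]
  rw [show Real.sqrt (1 + ‖gradient u x‖ ^ 2) = gW u x from rfl]
  field_simp
  ring

end Aux3

section Aux4

variable {m : ℕ} (u : EuclideanSpace ℝ (Fin (m+1)) → ℝ)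

local notation "L" => EuclideanSpace.equiv (Fin (m+1)) ℝ

noncomputable def pF (x : Fin (m+1) → ℝ) : Fin (m+1) → ℝ :=
  (EuclideanSpace.equiv (Fin (m+1)) ℝ) (gF u ((EuclideanSpace.equiv (Fin (m+1)) ℝ).symm x))

noncomputable def pF' (x : Fin (m+1) → ℝ) : (Fin (m+1) → ℝ) →L[ℝ] (Fin (m+1) → ℝ) :=
  ((EuclideanSpace.equiv (Fin (m+1)) ℝ : EuclideanSpace ℝ (Fin (m+1)) ≃L[ℝ] (Fin (m+1) → ℝ)) :
      EuclideanSpace ℝ (Fin (m+1)) →L[ℝ] (Fin (m+1) → ℝ)).comp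
    ((gF' u ((EuclideanSpace.equiv (Fin (m+1)) ℝ).symm x)).comp
      (((EuclideanSpace.equiv (Fin (m+1)) ℝ).symm :
          (Fin (m+1) → ℝ) ≃L[ℝ] EuclideanSpace ℝ (Fin (m+1))) :
        (Fin (m+1) → ℝ) →L[ℝ] EuclideanSpace ℝ (Fin (m+1))))

lemma hasFDerivAt_pF (hu : ContDiff ℝ (⊤ : ℕ∞) u) (x : Fin (m+1) → ℝ) :
    HasFDerivAt (pF u) (pF' u x) x := by
  have h0 : HasFDerivAt (⇑(EuclideanSpace.equiv (Fin (m+1)) ℝ).symm)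
      (((EuclideanSpace.equiv (Fin (m+1)) ℝ).symm :
          (Fin (m+1) → ℝ) ≃L[ℝ] EuclideanSpace ℝ (Fin (m+1))) :
        (Fin (m+1) → ℝ) →L[ℝ] EuclideanSpace ℝ (Fin (m+1))) x :=
    (EuclideanSpace.equiv (Fin (m+1)) ℝ).symm.hasFDerivAt
  have h1 := (hasFDerivAt_gF u hu ((EuclideanSpace.equiv (Fin (m+1)) ℝ).symm x)).comp x h0
  exact ((EuclideanSpace.equiv (Fin (m+1)) ℝ).hasFDerivAt).comp x h1

lemma div_pF (hmin : IsGaussWeightedMinimalGraph (m+1) u) (x : Fin (m+1) → ℝ) :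
    ∑ i, pF' u x (Pi.single i 1) i
      = gD u ((EuclideanSpace.equiv (Fin (m+1)) ℝ).symm x) := by
  rw [← div_gF u hmin ((EuclideanSpace.equiv (Fin (m+1)) ℝ).symm x)]
  apply Finset.sum_congr rfl
  intro i _
  rfl

lemma continuous_gF (hu : ContDiff ℝ (⊤ : ℕ∞) u) : Continuous (gF u) := by
  have hS : Continuous (gS u) := by
    apply Continuous.mul
    · exact Real.continuous_arctan.comp hu.continuous
    · exact Real.continuous_exp.comp ((continuous_norm.pow 2).neg.div_const 2)
  exact hS.smul (contDiff_gG u hu).continuous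

lemma continuous_gD (hu : ContDiff ℝ (⊤ : ℕ∞) u) : Continuous (gD u) := by
  have h1 : Continuous (gradient u) := (contDiff_gradient u hu).continuous
  apply Continuous.mul
  · exact Real.continuous_exp.comp ((continuous_norm.pow 2).neg.div_const 2)
  apply Continuous.mul
  · apply Continuous.inv₀
    · exact continuous_const.add ((hu.continuous).pow 2)
    · intro x; positivity
  apply Continuous.div
  · exact (h1.norm).pow 2
  · exact Real.continuous_sqrt.comp (continuous_const.add ((h1.norm).pow 2))
  · intro x; exact (gW_pos u x).ne'

lemma gD_nonneg (x : EuclideanSpace ℝ (Fin (m+1))) : 0 ≤ gD u x := by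
  have := gW_pos u x
  unfold gD
  positivity

lemma abs_coord_le {k : ℕ} (y : EuclideanSpace ℝ (Fin k)) (i : Fin k) : |y i| ≤ ‖y‖ := by
  rw [EuclideanSpace.norm_eq]
  rw [show |y i| = Real.sqrt ((y i) ^ 2) from (Real.sqrt_sq_eq_abs _).symm]
  apply Real.sqrt_le_sqrt
  exact Finset.single_le_sum (f := fun j => ‖y j‖ ^ 2) (fun j _ => by positivity)
    (Finset.mem_univ i) |>.trans_eq' (by rw [Real.norm_eq_abs, sq_abs])

lemma norm_gF_le (y : EuclideanSpace ℝ (Fin (m+1))) :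
    ‖gF u y‖ ≤ π / 2 * Real.exp (-‖y‖ ^ 2 / 2) := by
  have h1 : ‖gF u y‖ = |gS u y| * ‖gG u y‖ := by
    rw [gF, norm_smul, Real.norm_eq_abs]
  rw [h1]
  have h2 : |gS u y| ≤ π / 2 * Real.exp (-‖y‖ ^ 2 / 2) := by
    rw [gS, abs_mul, abs_of_pos (Real.exp_pos _)]
    gcongr
    exact (abs_lt.2 ⟨Real.neg_pi_div_two_lt_arctan _, Real.arctan_lt_pi_div_two _⟩).le
  calc |gS u y| * ‖gG u y‖ ≤ |gS u y| * 1 := by gcongr; exact norm_gG_le u y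
    _ = |gS u y| := mul_one _
    _ ≤ _ := h2

end Aux4

section Aux5

variable {m : ℕ} (u : EuclideanSpace ℝ (Fin (m+1)) → ℝ)

lemma face_bound (hR0 : (0:ℝ) ≤ 0) {R : ℝ} (hR : 0 < R) (i : Fin (m+1)) {c : ℝ} (hc : |c| = R) :
    |∫ x in Set.Icc (fun _ : Fin m => -R) (fun _ : Fin m => R), pF u (i.insertNth c x) i|
      ≤ π / 2 * Real.exp (-R ^ 2 / 2) * (2*R) ^ m := by
  have hle : (fun _ : Fin m => -R) ≤ (fun _ : Fin m => R) :=
    fun _ => by show -R ≤ R; linarith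
  have hμ : volume (Set.Icc (fun _ : Fin m => -R) (fun _ : Fin m => R)) < ⊤ := by
    rw [Real.volume_Icc_pi]
    exact ENNReal.prod_lt_top (fun j _ => ENNReal.ofReal_lt_top)
  have hvol : (volume (Set.Icc (fun _ : Fin m => -R) (fun _ : Fin m => R))).toReal
      = (2*R) ^ m := by
    rw [Real.volume_Icc_pi_toReal hle]
    simp [Finset.prod_const]
    ring_nf
  have key := norm_setIntegral_le_of_norm_le_const (μ := volume)
    (f := fun x => pF u (i.insertNth c x) i) (C := π / 2 * Real.exp (-R ^ 2 / 2)) hμ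
    ?_
  · rw [measureReal_def, hvol] at key
    exact key
  · intro x _
    set y : EuclideanSpace ℝ (Fin (m+1)) :=
      (EuclideanSpace.equiv (Fin (m+1)) ℝ).symm (i.insertNth c x) with hy
    show |gF u y i| ≤ π / 2 * Real.exp (-R ^ 2 / 2)
    have h2 : |gF u y i| ≤ ‖gF u y‖ := abs_coord_le _ i
    have h3 : ‖gF u y‖ ≤ π / 2 * Real.exp (-‖y‖ ^ 2 / 2) := norm_gF_le u y
    have h4 : R ≤ ‖y‖ := by
      have : y i = c := by
        rw [hy]
        exact Fin.insertNth_apply_same (α := fun _ : Fin (m+1) => ℝ) i c x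
      calc R = |y i| := by rw [this, hc]
        _ ≤ ‖y‖ := abs_coord_le _ _
    have h5 : Real.exp (-‖y‖ ^ 2 / 2) ≤ Real.exp (-R ^ 2 / 2) := by
      apply Real.exp_le_exp.2
      have : R ^ 2 ≤ ‖y‖ ^ 2 := by
        apply pow_le_pow_left₀ hR.le h4
      linarith
    calc |gF u y i| ≤ ‖gF u y‖ := h2
      _ ≤ π / 2 * Real.exp (-‖y‖ ^ 2 / 2) := h3
      _ ≤ π / 2 * Real.exp (-R ^ 2 / 2) := by gcongr

end Aux5

section Aux6

variable {m : ℕ} (u : EuclideanSpace ℝ (Fin (m+1)) → ℝ)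

lemma continuous_pF (hu : ContDiff ℝ (⊤ : ℕ∞) u) : Continuous (pF u) := by
  unfold pF
  exact (EuclideanSpace.equiv (Fin (m+1)) ℝ).continuous.comp
    ((continuous_gF u hu).comp (EuclideanSpace.equiv (Fin (m+1)) ℝ).symm.continuous)

lemma box_bound (hu : ContDiff ℝ (⊤ : ℕ∞) u) (hmin : IsGaussWeightedMinimalGraph (m+1) u)
    {R : ℝ} (hR : 0 < R) :
    |∫ x in Set.Icc (fun _ : Fin (m+1) => -R) (fun _ : Fin (m+1) => R),
        gD u ((EuclideanSpace.equiv (Fin (m+1)) ℝ).symm x)|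
      ≤ (m+1 : ℝ) * (π * Real.exp (-R ^ 2 / 2) * (2*R) ^ m) := by
  have hle : (fun _ : Fin (m+1) => -R) ≤ (fun _ : Fin (m+1) => R) :=
    fun _ => by show -R ≤ R; linarith
  have hfun : (fun x : Fin (m+1) → ℝ => ∑ i, pF' u x (Pi.single i 1) i)
      = fun x => gD u ((EuclideanSpace.equiv (Fin (m+1)) ℝ).symm x) :=
    funext (div_pF u hmin)
  have Hi : IntegrableOn (fun x => ∑ i, pF' u x (Pi.single i 1) i)
      (Set.Icc (fun _ : Fin (m+1) => -R) (fun _ : Fin (m+1) => R)) := by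
    rw [hfun]
    exact ((continuous_gD u hu).comp
      (EuclideanSpace.equiv (Fin (m+1)) ℝ).symm.continuous).continuousOn.integrableOn_compact
      isCompact_Icc
  have key := MeasureTheory.integral_divergence_of_hasFDerivAt_off_countable
    (fun _ : Fin (m+1) => -R) (fun _ : Fin (m+1) => R) hle (pF u) (pF' u) ∅
    Set.countable_empty (continuous_pF u hu).continuousOn
    (fun x _ => hasFDerivAt_pF u hu x) Hi
  rw [hfun] at key
  rw [key]
  have hface : ∀ (i : Fin (m+1)) (c : ℝ), |c| = R →
      |∫ x in Set.Icc ((fun _ : Fin (m+1) => -R) ∘ i.succAbove)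
          ((fun _ : Fin (m+1) => R) ∘ i.succAbove), pF u (i.insertNth c x) i|
        ≤ π / 2 * Real.exp (-R ^ 2 / 2) * (2*R) ^ m := by
    intro i c hc
    exact face_bound u le_rfl hR i hc
  calc |∑ i : Fin (m+1),
        ((∫ x in Set.Icc ((fun _ : Fin (m+1) => -R) ∘ i.succAbove)
            ((fun _ : Fin (m+1) => R) ∘ i.succAbove), pF u (i.insertNth R x) i)
          - ∫ x in Set.Icc ((fun _ : Fin (m+1) => -R) ∘ i.succAbove)
            ((fun _ : Fin (m+1) => R) ∘ i.succAbove), pF u (i.insertNth (-R) x) i)|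
      ≤ ∑ i : Fin (m+1),
        |((∫ x in Set.Icc ((fun _ : Fin (m+1) => -R) ∘ i.succAbove)
            ((fun _ : Fin (m+1) => R) ∘ i.succAbove), pF u (i.insertNth R x) i)
          - ∫ x in Set.Icc ((fun _ : Fin (m+1) => -R) ∘ i.succAbove)
            ((fun _ : Fin (m+1) => R) ∘ i.succAbove), pF u (i.insertNth (-R) x) i)| :=
      Finset.abs_sum_le_sum_abs _ _
    _ ≤ ∑ i : Fin (m+1),
        (π / 2 * Real.exp (-R ^ 2 / 2) * (2*R) ^ m
          + π / 2 * Real.exp (-R ^ 2 / 2) * (2*R) ^ m) := by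
      apply Finset.sum_le_sum
      intro i _
      calc |_ - _| ≤ |_| + |_| := abs_sub _ _
        _ ≤ _ := add_le_add (hface i R (abs_of_pos hR)) (hface i (-R) (by rw [abs_neg, abs_of_pos hR]))
    _ = (m+1 : ℝ) * (π * Real.exp (-R ^ 2 / 2) * (2*R) ^ m) := by
      rw [Finset.sum_const, Finset.card_univ, Fintype.card_fin]
      push_cast
      ring

end Aux6

section Aux7

lemma tendsto_box_bound (m : ℕ) :
    Filter.Tendsto (fun R : ℝ => (m+1 : ℝ) * (π * Real.exp (-R ^ 2 / 2) * (2*R) ^ m))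
      Filter.atTop (nhds 0) := by
  have h1 := tendsto_pow_mul_exp_neg_atTop_nhds_zero m
  have h2 : Filter.Tendsto (fun R : ℝ => R ^ m * Real.exp (-R ^ 2 / 2))
      Filter.atTop (nhds 0) := by
    apply squeeze_zero' (f := fun R : ℝ => R ^ m * Real.exp (-R ^ 2 / 2))
      (g := fun R : ℝ => R ^ m * Real.exp (-R)) (t₀ := Filter.atTop)
    · filter_upwards [Filter.eventually_ge_atTop (0:ℝ)] with R hR
      positivity
    · filter_upwards [Filter.eventually_ge_atTop (2:ℝ)] with R hR
      have h : -R ^ 2 / 2 ≤ -R := by nlinarith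
      have hRp : (0:ℝ) ≤ R ^ m := by positivity
      exact mul_le_mul_of_nonneg_left (Real.exp_le_exp.2 h) hRp
    · exact h1
  have h3 := h2.const_mul ((m+1 : ℝ) * π * 2 ^ m)
  rw [mul_zero] at h3
  convert h3 using 2 with R
  rw [mul_pow]
  ring

lemma grad_zero {m : ℕ} (u : EuclideanSpace ℝ (Fin (m+1)) → ℝ) (hu : ContDiff ℝ (⊤ : ℕ∞) u)
    (hmin : IsGaussWeightedMinimalGraph (m+1) u) (x₀ : EuclideanSpace ℝ (Fin (m+1))) :
    gradient u x₀ = 0 := by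
  by_contra hg
  have hnp : 0 < ‖gradient u x₀‖ := norm_pos_iff.2 hg
  have hc : 0 < gD u x₀ := by
    unfold gD
    have := gW_pos u x₀
    positivity
  set c := gD u x₀ with hcdef
  set x₁ : Fin (m+1) → ℝ := (EuclideanSpace.equiv (Fin (m+1)) ℝ) x₀ with hx₁
  set f : (Fin (m+1) → ℝ) → ℝ :=
    fun x => gD u ((EuclideanSpace.equiv (Fin (m+1)) ℝ).symm x) with hfdef
  have hfx₁ : f x₁ = c := by
    show gD u ((EuclideanSpace.equiv (Fin (m+1)) ℝ).symm
      ((EuclideanSpace.equiv (Fin (m+1)) ℝ) x₀)) = c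
    rw [ContinuousLinearEquiv.symm_apply_apply]
  have hcont : Continuous f :=
    (continuous_gD u hu).comp (EuclideanSpace.equiv (Fin (m+1)) ℝ).symm.continuous
  have heve : ∀ᶠ y in nhds x₁, c/2 < f y :=
    hcont.continuousAt.eventually (eventually_gt_nhds (by rw [hfx₁]; linarith))
  obtain ⟨δ, hδpos, hball⟩ := Metric.eventually_nhds_iff.mp heve
  set δ' := δ/2 with hδ'def
  have hδ'pos : 0 < δ' := by positivity
  set S := Set.Icc (fun i => x₁ i - δ') (fun i => x₁ i + δ') with hSdef
  have hSle : (fun i => x₁ i - δ') ≤ (fun i => x₁ i + δ') := fun i => by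
    show x₁ i - δ' ≤ x₁ i + δ'; linarith
  have hSf : ∀ y ∈ S, c/2 ≤ f y := by
    intro y hy
    apply le_of_lt
    apply hball
    rw [dist_pi_lt_iff hδpos]
    intro i
    rw [Real.dist_eq, abs_sub_lt_iff]
    obtain ⟨h1, h2⟩ := hy
    constructor
    · have := h2 i; simp only at this
      have hd : δ' = δ/2 := hδ'def
      linarith
    · have := h1 i; simp only at this
      have hd : δ' = δ/2 := hδ'def
      linarith
  have hvolS : (volume S).toReal = (2*δ') ^ (m+1) := by
    rw [hSdef, Real.volume_Icc_pi_toReal hSle]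
    simp [Finset.prod_const]
    ring_nf
  -- choose R
  have hR1 := (tendsto_box_bound m).eventually_lt_const
    (show (0:ℝ) < c/2 * (2*δ') ^ (m+1) by positivity)
  have hR2 : ∀ᶠ R : ℝ in Filter.atTop, ‖x₁‖ + δ' ≤ R := Filter.eventually_ge_atTop _
  have hR3 : ∀ᶠ R : ℝ in Filter.atTop, (0:ℝ) < R := Filter.eventually_gt_atTop 0
  obtain ⟨R, hRb, hRge, hRpos⟩ := (hR1.and (hR2.and hR3)).exists
  -- small box inside big box
  have hsub : S ⊆ Set.Icc (fun _ : Fin (m+1) => -R) (fun _ : Fin (m+1) => R) := by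
    intro y hy
    obtain ⟨h1, h2⟩ := hy
    constructor
    · intro i
      have hxi : |x₁ i| ≤ ‖x₁‖ := by
        simpa [Real.norm_eq_abs] using norm_le_pi_norm x₁ i
      have := h1 i
      simp only at this ⊢
      rw [abs_le] at hxi
      linarith
    · intro i
      have hxi : |x₁ i| ≤ ‖x₁‖ := by
        simpa [Real.norm_eq_abs] using norm_le_pi_norm x₁ i
      have := h2 i
      simp only at this ⊢
      rw [abs_le] at hxi
      linarith
  have hIntBig : IntegrableOn f
      (Set.Icc (fun _ : Fin (m+1) => -R) (fun _ : Fin (m+1) => R)) volume :=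
    hcont.continuousOn.integrableOn_compact isCompact_Icc
  have hμS : volume S ≠ ⊤ := by
    rw [hSdef, Real.volume_Icc_pi]
    exact (ENNReal.prod_lt_top (fun j _ => ENNReal.ofReal_lt_top)).ne
  have hlow : c/2 * (2*δ') ^ (m+1) ≤ ∫ x in S, f x := by
    rw [← hvolS]
    exact setIntegral_ge_of_const_le_real measurableSet_Icc hμS hSf
      (hcont.continuousOn.integrableOn_compact isCompact_Icc)
  have hmono : ∫ x in S, f x
      ≤ ∫ x in Set.Icc (fun _ : Fin (m+1) => -R) (fun _ : Fin (m+1) => R), f x := by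
    apply setIntegral_mono_set hIntBig
    · exact Filter.Eventually.of_forall (fun x => gD_nonneg u _)
    · exact HasSubset.Subset.eventuallyLE hsub
  have hup := box_bound u hu hmin hRpos
  have : ∫ x in Set.Icc (fun _ : Fin (m+1) => -R) (fun _ : Fin (m+1) => R), f x
      ≤ (m+1 : ℝ) * (π * Real.exp (-R ^ 2 / 2) * (2*R) ^ m) :=
    (le_abs_self _).trans hup
  linarith

end Aux7

/-- Bernstein theorem in `𝔾ⁿ × ℝ`: The graph of a smooth
`u : ℝⁿ → ℝ` is weighted minimal in `ℝ^{n+1}` with density `(2π)^{-n/2} e^{-|x|²/2}`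
if and only if `u` is constant, i.e. the graph is a horizontal hyperplane
`{x_{n+1} = a}`. -/
theorem bernstein_gauss_space
    (n : ℕ) (u : EuclideanSpace ℝ (Fin n) → ℝ) (hu : ContDiff ℝ (⊤ : ℕ∞) u) :
    IsGaussWeightedMinimalGraph n u ↔ ∃ a : ℝ, ∀ x, u x = a := by
  constructor
  · intro hmin
    cases n with
    | zero =>
      refine ⟨u 0, fun x => ?_⟩
      have : x = 0 := PiLp.ext fun i => i.elim0
      rw [this]
    | succ m =>
      have hz : ∀ x, gradient u x = 0 := grad_zero u hu hmin
      have hfz : ∀ x, fderiv ℝ u x = 0 := by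
        intro x
        have h : (InnerProductSpace.toDual ℝ
            (EuclideanSpace ℝ (Fin (m+1)))).symm (fderiv ℝ u x) = 0 := hz x
        have h2 := congrArg (InnerProductSpace.toDual ℝ (EuclideanSpace ℝ (Fin (m+1)))) h
        rwa [LinearIsometryEquiv.apply_symm_apply, map_zero] at h2
      exact ⟨u 0, fun x => is_const_of_fderiv_eq_zero (hu.differentiable (by simp)) hfz x 0⟩
  · rintro ⟨a, ha⟩ x
    have hua : u = fun _ => a := funext ha
    have hg : ∀ y, gradient u y = 0 := by
      intro y; rw [hua]
      exact gradient_const (𝕜 := ℝ) (F := EuclideanSpace ℝ (Fin n)) (x := y) (c := a)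
    have hfun : (fun y => (Real.sqrt (1 + ‖gradient u y‖ ^ 2))⁻¹ • gradient u y)
        = fun _ => (0 : EuclideanSpace ℝ (Fin n)) := by
      funext y; rw [hg y]; simp
    rw [hfun, hg x]
    simp
end
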